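/- arXiv:1303.2362 — 6 statements merged into one kernel-verified Lean document; each statement's English description precedes it below -/
import Mathlib

section
/- For any octuple of positive integers (L,m,x,y,z,r,R,\rho), every coefficient in the power series expansion of 1/((q^x;q^m)_L (q^y;q^m)_L (q^z;q^m)_L (q^{rx+Ry+\rho z};q^m)_L) - 1/((q^{rx};q^m)_L (q^{Ry};q^m)_L (q^{\rho z};q^m)_L (q^{x+y+z};q^m)_L) is nonnegative. -/
/-!
Write `u e = 1 / (1 - q ^ e)`, let `A j = u (x + jm) u (y + jm) u (z + jm) u (W + jm)` with
`W = rx + Ry + ρz`, and let `B j` be the same with `(rx, Ry, ρz, x + y + z)`. Splitting off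
`j = 0`, `∏ A - ∏ B = (A 0 - B 0) ∏_{j ≥ 1} B j + A 0 (∏_{j ≥ 1} A j - ∏_{j ≥ 1} B j)`, and the
last difference telescopes into terms `A 0 (A j - B j)` times products of `A`'s and `B`'s. So it
suffices that `A 0 - B 0` and `A 0 (A j - B j)` have nonnegative coefficients.

For `A 0 - B 0`, sorting the exponent triples by the first index attaining their minimum gives
`u a u b u c = u (a + b + c) (u b u c + q^a u a u c + q^(a+b) u a u b)`, and each of these three
products can only lose terms when `a, b, c` are replaced by multiples of themselves.

For `A 0 (A j - B j)`, replace `x, y, z` by `rx, Ry, ρz` one at a time. Each step changes one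
pair of factors, by `u (a+s) u (a'+B+s) - u (a'+s) u (a+B+s) = q^s (q^a - q^a') (1 - q^B)` times
these four factors, and `A 0` supplies `u x, u y, u z` to absorb `q^a - q^a'` (as `a ∣ a'`) and
`1 - q^B` (as `B` is a sum of multiples of the other two variables).
-/

open PowerSeries Finset

namespace Subsemiring

variable {R : Type*}

theorem mul_sub_mul_mem [Ring R] (S : Subsemiring R) {p p' q q' : R} (hp : p ∈ S) (hq' : q' ∈ S)
    (hpp' : p' - p ∈ S) (hqq' : q' - q ∈ S) : p' * q' - p * q ∈ S := by
  convert add_mem (mul_mem hpp' hq') (mul_mem hp hqq') using 1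
  noncomm_ring

variable [CommRing R] (S : Subsemiring R)

theorem mul_prod_sub_prod_mem {ι : Type*} {s : Finset ι} {A B : ι → R} (c : R)
    (hA : ∀ i ∈ s, A i ∈ S) (hB : ∀ i ∈ s, B i ∈ S) (h : ∀ i ∈ s, c * (A i - B i) ∈ S) :
    c * (∏ i ∈ s, A i - ∏ i ∈ s, B i) ∈ S := by
  induction s using Finset.cons_induction with
  | empty => simp
  | cons i s hi ih =>
    simp only [mem_cons, forall_eq_or_imp] at hA hB h
    rw [prod_cons, prod_cons]
    convert add_mem (mul_mem h.1 (prod_mem hA.2)) (mul_mem hB.1 (ih hA.2 hB.2 h.2)) using 1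
    ring

theorem prod_range_sub_prod_range_mem {A B : ℕ → R} (hA : ∀ j, A j ∈ S) (hB : ∀ j, B j ∈ S)
    (h₀ : A 0 - B 0 ∈ S) (h : ∀ j, A 0 * (A j - B j) ∈ S) (L : ℕ) :
    ∏ j ∈ range L, A j - ∏ j ∈ range L, B j ∈ S := by
  cases L with
  | zero => simp
  | succ L =>
    rw [prod_range_succ', prod_range_succ']
    have htail := S.mul_prod_sub_prod_mem (s := range L) (A 0) (fun j _ => hA (j + 1))
      (fun j _ => hB (j + 1)) (fun j _ => h (j + 1))
    convert add_mem (mul_mem h₀ (prod_mem fun j _ => hB (j + 1))) htail using 1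
    ring

end Subsemiring

namespace PowerSeries

section NonnegCoeffs

variable (R : Type*) [Semiring R] [PartialOrder R] [IsOrderedRing R]

def nonnegCoeffs : Subsemiring R⟦X⟧ where
  carrier := {f | ∀ n, 0 ≤ coeff n f}
  mul_mem' {f g} hf hg n := by
    rw [coeff_mul]
    exact sum_nonneg fun p _ => mul_nonneg (hf _) (hg _)
  one_mem' n := by
    rw [coeff_one]
    split_ifs <;> simp
  add_mem' {f g} hf hg n := by
    rw [map_add]
    exact add_nonneg (hf n) (hg n)
  zero_mem' n := by simp

variable {R}

theorem mem_nonnegCoeffs {f : R⟦X⟧} : f ∈ nonnegCoeffs R ↔ ∀ n, 0 ≤ coeff n f :=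
  Iff.rfl

theorem X_pow_mem_nonnegCoeffs (e : ℕ) : (X : R⟦X⟧) ^ e ∈ nonnegCoeffs R := by
  refine pow_mem (fun n => ?_) e
  rw [coeff_X]
  split_ifs <;> simp

end NonnegCoeffs

theorem one_sub_X_pow_add_mul_mem {R : Type*} [CommRing R] [PartialOrder R] [IsOrderedRing R]
    {p q : ℕ} {g h : R⟦X⟧} (hg : g ∈ nonnegCoeffs R) (hh : h ∈ nonnegCoeffs R)
    (hpg : (1 - X ^ p) * g ∈ nonnegCoeffs R) (hqh : (1 - X ^ q) * h ∈ nonnegCoeffs R) :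
    (1 - X ^ (p + q)) * (g * h) ∈ nonnegCoeffs R := by
  convert add_mem (mul_mem hpg hh) (mul_mem (mul_mem (X_pow_mem_nonnegCoeffs p) hqh) hg) using 1
  ring

section Field

variable {k : Type*} [Field k] {a b c e : ℕ}

theorem inv_prod {ι : Type*} (s : Finset ι) (f : ι → k⟦X⟧) :
    (∏ i ∈ s, f i)⁻¹ = ∏ i ∈ s, (f i)⁻¹ := by
  induction s using Finset.cons_induction with
  | empty => simp
  | cons a s ha ih => rw [prod_cons, prod_cons, PowerSeries.mul_inv_rev, ih, mul_comm]

theorem inv_sub_inv {φ ψ : k⟦X⟧} (hφ : constantCoeff φ ≠ 0) (hψ : constantCoeff ψ ≠ 0) :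
    φ⁻¹ - ψ⁻¹ = φ⁻¹ * ψ⁻¹ * (ψ - φ) := by
  linear_combination ψ⁻¹ * PowerSeries.mul_inv_cancel φ hφ - φ⁻¹ * PowerSeries.mul_inv_cancel ψ hψ

theorem constantCoeff_one_sub_X_pow (he : 0 < e) : constantCoeff (1 - X ^ e : k⟦X⟧) = 1 := by
  simp [he.ne']

theorem one_sub_X_pow_mul_inv (he : 0 < e) : (1 - X ^ e : k⟦X⟧) * (1 - X ^ e)⁻¹ = 1 :=
  PowerSeries.mul_inv_cancel _ (by simp [constantCoeff_one_sub_X_pow he])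

theorem X_pow_mul_inv_one_sub_X_pow (he : 0 < e) :
    X ^ e * (1 - X ^ e : k⟦X⟧)⁻¹ = (1 - X ^ e)⁻¹ - 1 := by
  linear_combination -one_sub_X_pow_mul_inv (k := k) he

theorem inv_mul_inv_mul_inv_eq (ha : 0 < a) (hb : 0 < b) (hc : 0 < c) :
    (1 - X ^ a : k⟦X⟧)⁻¹ * (1 - X ^ b)⁻¹ * (1 - X ^ c)⁻¹ = (1 - X ^ (a + b + c))⁻¹ *
      ((1 - X ^ b)⁻¹ * (1 - X ^ c)⁻¹ + X ^ a * (1 - X ^ a)⁻¹ * (1 - X ^ c)⁻¹ +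
        X ^ a * (1 - X ^ a)⁻¹ * (X ^ b * (1 - X ^ b)⁻¹)) := by
  linear_combination
    -((1 - X ^ a : k⟦X⟧)⁻¹ * (1 - X ^ b)⁻¹ * (1 - X ^ c)⁻¹) *
      one_sub_X_pow_mul_inv (k := k) (show 0 < a + b + c by omega) +
    (1 - X ^ (a + b + c) : k⟦X⟧)⁻¹ *
      ((1 - X ^ b)⁻¹ * (1 - X ^ c)⁻¹ * one_sub_X_pow_mul_inv (k := k) ha +
        X ^ a * (1 - X ^ a)⁻¹ * (1 - X ^ c)⁻¹ * one_sub_X_pow_mul_inv (k := k) hb +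
        X ^ a * (1 - X ^ a)⁻¹ * (X ^ b * (1 - X ^ b)⁻¹) * one_sub_X_pow_mul_inv (k := k) hc)

end Field

section OrderedField

variable {K : Type*} [Field K] [LinearOrder K] [IsStrictOrderedRing K] {a b e : ℕ}

theorem inv_one_sub_X_pow_mem (he : 0 < e) : (1 - X ^ e : K⟦X⟧)⁻¹ ∈ nonnegCoeffs K := by
  intro n
  induction n using Nat.strong_induction_on with
  | _ n ih =>
    -- `u = 1 + X ^ e * u` expresses each coefficient through an earlier one
    rw [← sub_add_cancel (1 - X ^ e : K⟦X⟧)⁻¹ 1, ← X_pow_mul_inv_one_sub_X_pow he, map_add,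
      coeff_X_pow_mul', coeff_one]
    refine add_nonneg ?_ ?_
    · split_ifs with h
      · exact ih _ (by omega)
      · exact le_rfl
    · split_ifs <;> simp

theorem one_sub_X_pow_mul_inv_mem_of_dvd {p : ℕ} (ha : 0 < a) (h : a ∣ p) :
    (1 - X ^ p) * (1 - X ^ a : K⟦X⟧)⁻¹ ∈ nonnegCoeffs K := by
  obtain ⟨k, rfl⟩ := h
  rw [pow_mul, ← geom_sum_mul_neg, mul_assoc, one_sub_X_pow_mul_inv ha, mul_one]
  exact sum_mem fun i _ => pow_mem (X_pow_mem_nonnegCoeffs a) i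

theorem X_pow_sub_X_pow_mul_inv_mem (ha : 0 < a) (hb : 0 < b) (h : a ∣ b) :
    (X ^ a - X ^ b) * (1 - X ^ a : K⟦X⟧)⁻¹ ∈ nonnegCoeffs K := by
  obtain ⟨k, rfl⟩ := h
  obtain ⟨k, rfl⟩ : ∃ k', k = k' + 1 := ⟨k - 1, by grind⟩
  convert mul_mem (X_pow_mem_nonnegCoeffs (R := K) a)
    (one_sub_X_pow_mul_inv_mem_of_dvd ha (dvd_mul_right a k)) using 1
  ring

theorem inv_one_sub_X_pow_sub_mem (ha : 0 < a) (hb : 0 < b) (h : a ∣ b) :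
    (1 - X ^ a : K⟦X⟧)⁻¹ - (1 - X ^ b)⁻¹ ∈ nonnegCoeffs K := by
  rw [inv_sub_inv (by simp [constantCoeff_one_sub_X_pow ha])
    (by simp [constantCoeff_one_sub_X_pow hb])]
  convert mul_mem (X_pow_sub_X_pow_mul_inv_mem ha hb h) (inv_one_sub_X_pow_mem (K := K) hb) using 1
  ring

theorem X_pow_mul_inv_sub_mem (ha : 0 < a) (hb : 0 < b) (h : a ∣ b) :
    X ^ a * (1 - X ^ a : K⟦X⟧)⁻¹ - X ^ b * (1 - X ^ b)⁻¹ ∈ nonnegCoeffs K := by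
  rw [X_pow_mul_inv_one_sub_X_pow ha, X_pow_mul_inv_one_sub_X_pow hb, sub_sub_sub_cancel_right]
  exact inv_one_sub_X_pow_sub_mem ha hb h

theorem inv_mul_inv_sub_inv_mul_inv_mem {a' B d d' s : ℕ} {g : K⟦X⟧} (ha : 0 < a) (ha' : 0 < a')
    (h : a ∣ a') (hd : d = a' + B) (hd' : d' = a + B) (hg : (1 - X ^ B) * g ∈ nonnegCoeffs K) :
    (1 - X ^ a)⁻¹ * g * ((1 - X ^ (a + s))⁻¹ * (1 - X ^ (d + s))⁻¹ -
      (1 - X ^ (a' + s))⁻¹ * (1 - X ^ (d' + s))⁻¹) ∈ nonnegCoeffs K := by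
  subst hd hd'
  have hu : ∀ {e}, 0 < e → (1 - X ^ e : K⟦X⟧)⁻¹ ∈ nonnegCoeffs K := inv_one_sub_X_pow_mem
  rw [← PowerSeries.mul_inv_rev, ← PowerSeries.mul_inv_rev,
    inv_sub_inv
      (by simp [zero_pow (show a' + B + s ≠ 0 by omega), zero_pow (show a + s ≠ 0 by omega)])
      (by simp [zero_pow (show a + B + s ≠ 0 by omega), zero_pow (show a' + s ≠ 0 by omega)]),
    PowerSeries.mul_inv_rev, PowerSeries.mul_inv_rev]
  convert mul_mem (mul_mem (mul_mem (X_pow_mem_nonnegCoeffs s)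
    (X_pow_sub_X_pow_mul_inv_mem ha ha' h)) hg)
    (mul_mem (mul_mem (mul_mem (hu (show 0 < a + s by omega)) (hu (show 0 < a' + B + s by omega)))
      (hu (show 0 < a' + s by omega))) (hu (show 0 < a + B + s by omega))) using 1
  ring

end OrderedField

end PowerSeries

/-- With `s = j * m`, the `j`-th factor of
`1 / ((q^a;q^m)_L (q^b;q^m)_L (q^c;q^m)_L (q^d;q^m)_L)`. -/
noncomputable def quadInv {k : Type*} [Field k] (a b c d s : ℕ) : k⟦X⟧ :=
  (1 - X ^ (a + s))⁻¹ * (1 - X ^ (b + s))⁻¹ * (1 - X ^ (c + s))⁻¹ * (1 - X ^ (d + s))⁻¹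

theorem prod_quadInv {k : Type*} [Field k] (a b c d m L : ℕ) :
    ∏ j ∈ range L, quadInv (k := k) a b c d (j * m) =
      (∏ j ∈ range L, (1 - X ^ (a + j * m)))⁻¹ * (∏ j ∈ range L, (1 - X ^ (b + j * m)))⁻¹ *
        (∏ j ∈ range L, (1 - X ^ (c + j * m)))⁻¹ * (∏ j ∈ range L, (1 - X ^ (d + j * m)))⁻¹ := by
  simp only [quadInv, prod_mul_distrib, inv_prod]

section OrderedField

variable {K : Type*} [Field K] [LinearOrder K] [IsStrictOrderedRing K] {a b c a' b' c' : ℕ}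

theorem quadInv_mem {d : ℕ} (s : ℕ) (ha : 0 < a) (hb : 0 < b) (hc : 0 < c) (hd : 0 < d) :
    quadInv a b c d s ∈ nonnegCoeffs K :=
  mul_mem (mul_mem (mul_mem (inv_one_sub_X_pow_mem (by omega)) (inv_one_sub_X_pow_mem (by omega)))
    (inv_one_sub_X_pow_mem (by omega))) (inv_one_sub_X_pow_mem (by omega))

theorem quadInv_zero_sub_mem (ha : 0 < a) (hb : 0 < b) (hc : 0 < c) (ha' : 0 < a') (hb' : 0 < b')
    (hc' : 0 < c') (haa' : a ∣ a') (hbb' : b ∣ b') (hcc' : c ∣ c') :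
    quadInv a b c (a' + b' + c') 0 - quadInv a' b' c' (a + b + c) 0 ∈ nonnegCoeffs K := by
  have hu : ∀ {e}, 0 < e → (1 - X ^ e : K⟦X⟧)⁻¹ ∈ nonnegCoeffs K := inv_one_sub_X_pow_mem
  have hv : ∀ {e}, 0 < e → X ^ e * (1 - X ^ e : K⟦X⟧)⁻¹ ∈ nonnegCoeffs K := fun he =>
    mul_mem (X_pow_mem_nonnegCoeffs _) (hu he)
  simp only [quadInv, add_zero]
  rw [inv_mul_inv_mul_inv_eq ha hb hc, inv_mul_inv_mul_inv_eq ha' hb' hc']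
  have h₁ := (nonnegCoeffs K).mul_sub_mul_mem (hu hb') (hu hc)
    (inv_one_sub_X_pow_sub_mem hb hb' hbb') (inv_one_sub_X_pow_sub_mem hc hc' hcc')
  have h₂ := (nonnegCoeffs K).mul_sub_mul_mem (hv ha') (hu hc)
    (X_pow_mul_inv_sub_mem ha ha' haa') (inv_one_sub_X_pow_sub_mem hc hc' hcc')
  have h₃ := (nonnegCoeffs K).mul_sub_mul_mem (hv ha') (hv hb)
    (X_pow_mul_inv_sub_mem ha ha' haa') (X_pow_mul_inv_sub_mem hb hb' hbb')
  convert mul_mem (mul_mem (hu (show 0 < a + b + c by omega))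
    (hu (show 0 < a' + b' + c' by omega))) (add_mem (add_mem h₁ h₂) h₃) using 1
  ring

theorem quadInv_zero_mul_sub_mem (s : ℕ) (ha : 0 < a) (hb : 0 < b) (hc : 0 < c) (ha' : 0 < a')
    (hb' : 0 < b') (hc' : 0 < c') (haa' : a ∣ a') (hbb' : b ∣ b') (hcc' : c ∣ c') :
    quadInv a b c (a' + b' + c') 0 *
      (quadInv a b c (a' + b' + c') s - quadInv a' b' c' (a + b + c) s) ∈ nonnegCoeffs K := by
  have hu : ∀ {e}, 0 < e → (1 - X ^ e : K⟦X⟧)⁻¹ ∈ nonnegCoeffs K := inv_one_sub_X_pow_mem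
  have hdvd : ∀ {e p}, 0 < e → e ∣ p → (1 - X ^ p) * (1 - X ^ e : K⟦X⟧)⁻¹ ∈ nonnegCoeffs K :=
    one_sub_X_pow_mul_inv_mem_of_dvd
  have h₁ := inv_mul_inv_sub_inv_mul_inv_mem (s := s) (d := a' + b' + c') (d' := a + b' + c')
    ha ha' haa' (by ring) (by ring) (one_sub_X_pow_add_mul_mem (hu hb) (hu hc) (hdvd hb hbb')
      (hdvd hc hcc'))
  have h₂ := inv_mul_inv_sub_inv_mul_inv_mem (s := s) (d := a + b' + c') (d' := a + b + c')
    hb hb' hbb' (by ring) (by ring) (one_sub_X_pow_add_mul_mem (hu ha) (hu hc) (hdvd ha dvd_rfl)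
      (hdvd hc hcc'))
  have h₃ := inv_mul_inv_sub_inv_mul_inv_mem (s := s) (d := a + b + c') (d' := a + b + c)
    hc hc' hcc' (by ring) (by ring) (one_sub_X_pow_add_mul_mem (hu ha) (hu hb) (hdvd ha dvd_rfl)
      (hdvd hb dvd_rfl))
  have hW := hu (show 0 < a' + b' + c' by omega)
  have hs : ∀ {e}, 0 < e → (1 - X ^ (e + s) : K⟦X⟧)⁻¹ ∈ nonnegCoeffs K := fun he => hu (by omega)
  convert add_mem (add_mem (mul_mem (mul_mem (mul_mem hW (hs hb)) (hs hc)) h₁)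
    (mul_mem (mul_mem (mul_mem hW (hs ha')) (hs hc)) h₂))
    (mul_mem (mul_mem (mul_mem hW (hs ha')) (hs hb')) h₃) using 1
  simp only [quadInv, add_zero]
  ring

theorem prod_quadInv_sub_mem (m L : ℕ) (ha : 0 < a) (hb : 0 < b) (hc : 0 < c) (ha' : 0 < a')
    (hb' : 0 < b') (hc' : 0 < c') (haa' : a ∣ a') (hbb' : b ∣ b') (hcc' : c ∣ c') :
    ∏ j ∈ range L, quadInv a b c (a' + b' + c') (j * m) -
      ∏ j ∈ range L, quadInv a' b' c' (a + b + c) (j * m) ∈ nonnegCoeffs K := by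
  refine (nonnegCoeffs K).prod_range_sub_prod_range_mem
    (fun j => quadInv_mem _ ha hb hc (by omega)) (fun j => quadInv_mem _ ha' hb' hc' (by omega))
    ?_ (fun j => ?_) L
  · simpa only [zero_mul] using quadInv_zero_sub_mem ha hb hc ha' hb' hc' haa' hbb' hcc'
  · simpa only [zero_mul] using
      quadInv_zero_mul_sub_mem (j * m) ha hb hc ha' hb' hc' haa' hbb' hcc'

end OrderedField

theorem dominant_xyz_general (L m x y z r R ρ : ℕ)
    (hx : 0 < x) (hy : 0 < y) (hz : 0 < z)
    (hr : 0 < r) (hR : 0 < R) (hρ : 0 < ρ) (n : ℕ) :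
    0 ≤ PowerSeries.coeff (R := ℚ) n
      ((∏ j ∈ range L, (1 - (X : ℚ⟦X⟧) ^ (x + j * m)))⁻¹ *
        (∏ j ∈ range L, (1 - (X : ℚ⟦X⟧) ^ (y + j * m)))⁻¹ *
        (∏ j ∈ range L, (1 - (X : ℚ⟦X⟧) ^ (z + j * m)))⁻¹ *
        (∏ j ∈ range L, (1 - (X : ℚ⟦X⟧) ^ (r * x + R * y + ρ * z + j * m)))⁻¹ -
       (∏ j ∈ range L, (1 - (X : ℚ⟦X⟧) ^ (r * x + j * m)))⁻¹ *
        (∏ j ∈ range L, (1 - (X : ℚ⟦X⟧) ^ (R * y + j * m)))⁻¹ *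
        (∏ j ∈ range L, (1 - (X : ℚ⟦X⟧) ^ (ρ * z + j * m)))⁻¹ *
        (∏ j ∈ range L, (1 - (X : ℚ⟦X⟧) ^ (x + y + z + j * m)))⁻¹) := by
  rw [← prod_quadInv, ← prod_quadInv]
  exact mem_nonnegCoeffs.1 (prod_quadInv_sub_mem m L hx hy hz (Nat.mul_pos hr hx)
    (Nat.mul_pos hR hy) (Nat.mul_pos hρ hz) (dvd_mul_left x r) (dvd_mul_left y R)
    (dvd_mul_left z ρ)) n

theorem dominant_xyz (L m x y z r R ρ : ℕ) (hL : 0 < L) (hm : 0 < m)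
    (hx : 0 < x) (hy : 0 < y) (hz : 0 < z)
    (hr : 0 < r) (hR : 0 < R) (hρ : 0 < ρ) (n : ℕ) :
    0 ≤ PowerSeries.coeff (R := ℚ) n
      ((∏ j ∈ range L, (1 - (X : ℚ⟦X⟧) ^ (x + j * m)))⁻¹ *
        (∏ j ∈ range L, (1 - (X : ℚ⟦X⟧) ^ (y + j * m)))⁻¹ *
        (∏ j ∈ range L, (1 - (X : ℚ⟦X⟧) ^ (z + j * m)))⁻¹ *
        (∏ j ∈ range L, (1 - (X : ℚ⟦X⟧) ^ (r * x + R * y + ρ * z + j * m)))⁻¹ -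
       (∏ j ∈ range L, (1 - (X : ℚ⟦X⟧) ^ (r * x + j * m)))⁻¹ *
        (∏ j ∈ range L, (1 - (X : ℚ⟦X⟧) ^ (R * y + j * m)))⁻¹ *
        (∏ j ∈ range L, (1 - (X : ℚ⟦X⟧) ^ (ρ * z + j * m)))⁻¹ *
        (∏ j ∈ range L, (1 - (X : ℚ⟦X⟧) ^ (x + y + z + j * m)))⁻¹) :=
  dominant_xyz_general L m x y z r R ρ hx hy hz hr hR hρ n
end

section
/- Let r and R be positive integers. The rational function f(x,y,t) = [(1-xy)(1-t x^r)(1-t y^R) + (1-t^2)(x-x^r)(y-y^R)] / [(1-t x^r)(1-t y^R)(1-x)(1-y)(1-tx)(1-ty)] has nonnegative coefficients when expanded as a power series in x, y, t centered at the origin. -/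
open MvPowerSeries

noncomputable def fBG (r R : ℕ) : MvPowerSeries (Fin 3) ℚ :=
  let x : MvPowerSeries (Fin 3) ℚ := X 0
  let y : MvPowerSeries (Fin 3) ℚ := X 1
  let t : MvPowerSeries (Fin 3) ℚ := X 2
  ((1 - x * y) * (1 - t * x ^ r) * (1 - t * y ^ R) +
      (1 - t ^ 2) * (x - x ^ r) * (y - y ^ R)) *
    ((1 - t * x ^ r) * (1 - t * y ^ R) * (1 - x) * (1 - y) *
      (1 - t * x) * (1 - t * y))⁻¹

/-!
Writing `x - x ^ r = (1 - x) P` with `P = x + ⋯ + x ^ (r - 1)`, and likewise `y - y ^ R = (1 - y) Q`,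
the rational function splits into the five partial fractions of `fBGDecomp`. Each is a product of
`x`, `y`, `t`, `P`, `Q` and geometric series `1 / (1 - m)` in monomials `m`; the only sign, in
`(1 - t² x y) / ((1 - t x) (1 - t y))`, disappears on writing that factor as
`1 / (1 - t x) + t y / (1 - t y)`. So every coefficient is nonnegative. The splitting is an identity
of rational functions, checked in the fraction field of the power series ring.
-/

def fBGExpr {A : Type*} [CommRing A] [Inv A] (x y t : A) (r R : ℕ) : A :=
  ((1 - x * y) * (1 - t * x ^ r) * (1 - t * y ^ R) + (1 - t ^ 2) * (x - x ^ r) * (y - y ^ R)) *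
    ((1 - t * x ^ r) * (1 - t * y ^ R) * (1 - x) * (1 - y) * (1 - t * x) * (1 - t * y))⁻¹

def fBGDecomp {A : Type*} [CommRing A] [Inv A] (x y t P Q : A) (r R : ℕ) : A :=
  (1 - x)⁻¹ * (1 - t * x ^ r)⁻¹ * (1 - t * y)⁻¹ +
    t * P * ((1 - t * x)⁻¹ * (1 - t * x ^ r)⁻¹ * (1 - t * y ^ R)⁻¹) +
    y * ((1 - y)⁻¹ * (1 - t * x)⁻¹ * (1 - t * y ^ R)⁻¹) +
    t * y * Q * ((1 - t * x ^ r)⁻¹ * (1 - t * y)⁻¹ * (1 - t * y ^ R)⁻¹) +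
    P * Q * ((1 - t * x)⁻¹ + t * y * (1 - t * y)⁻¹) * ((1 - t * x ^ r)⁻¹ * (1 - t * y ^ R)⁻¹)

theorem fBGExpr_eq_fBGDecomp {K : Type*} [Field K] {x y t P Q : K} {r R : ℕ}
    (hP : (1 - x) * P = x - x ^ r) (hQ : (1 - y) * Q = y - y ^ R)
    (hx : 1 - x ≠ 0) (hy : 1 - y ≠ 0) (htx : 1 - t * x ≠ 0) (hty : 1 - t * y ≠ 0)
    (htxr : 1 - t * x ^ r ≠ 0) (htyR : 1 - t * y ^ R ≠ 0) :
    fBGExpr x y t r R = fBGDecomp x y t P Q r R := by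
  have hxr : x ^ r = x - (1 - x) * P := by linear_combination hP
  have hyR : y ^ R = y - (1 - y) * Q := by linear_combination hQ
  unfold fBGExpr fBGDecomp
  -- `field_simp` looks for the nonvanishing of denominators in its own normal form
  rw [mul_comm t x] at htx ⊢
  rw [mul_comm t y] at hty ⊢
  field_simp
  rw [hxr, hyR]
  ring

namespace MvPowerSeries

section NonnegCoeffs

variable {σ R : Type*} [Semiring R] [PartialOrder R] [IsOrderedRing R]

variable (σ R) in
def nonnegCoeffs : Subsemiring (MvPowerSeries σ R) where
  carrier := {φ | ∀ d, 0 ≤ coeff d φ}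
  zero_mem' d := by simp
  one_mem' d := by classical rw [coeff_one]; split_ifs <;> simp
  add_mem' hφ hψ d := by rw [map_add]; exact add_nonneg (hφ d) (hψ d)
  mul_mem' {φ ψ} hφ hψ d := by
    classical
    rw [coeff_mul]
    exact Finset.sum_nonneg fun p _ => mul_nonneg (hφ p.1) (hψ p.2)

theorem X_mem_nonnegCoeffs (i : σ) : X i ∈ nonnegCoeffs σ R := by
  classical
  intro d
  rw [coeff_X]
  split_ifs <;> simp

theorem mem_nonnegCoeffs_of_eq_one_add_mul {φ g : MvPowerSeries σ R} (hφ : φ ∈ nonnegCoeffs σ R)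
    (hφ0 : constantCoeff φ = 0) (hg : g = 1 + φ * g) : g ∈ nonnegCoeffs σ R := by
  classical
  intro d
  induction d using WellFoundedLT.induction with
  | ind d ih =>
    rw [hg, map_add, coeff_mul]
    refine add_nonneg ((nonnegCoeffs σ R).one_mem d) (Finset.sum_nonneg fun p hp => ?_)
    rcases eq_or_ne p.1 0 with h0 | h0
    · simp [h0, hφ0]
    · have hlt : p.2 < d := by
        rw [Finset.HasAntidiagonal.mem_antidiagonal] at hp
        exact lt_of_le_of_ne (hp ▸ le_add_self) fun h => h0 (by simpa [h] using hp)
      exact mul_nonneg (hφ p.1) (ih p.2 hlt)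

end NonnegCoeffs

variable {σ k : Type*} [Field k]

theorem inv_one_sub_mem_nonnegCoeffs [PartialOrder k] [IsOrderedRing k]
    {φ : MvPowerSeries σ k} (hφ : φ ∈ nonnegCoeffs σ k) (hφ0 : constantCoeff φ = 0) :
    (1 - φ)⁻¹ ∈ nonnegCoeffs σ k := by
  refine mem_nonnegCoeffs_of_eq_one_add_mul hφ hφ0 ?_
  have h : (1 - φ) * (1 - φ)⁻¹ = 1 := MvPowerSeries.mul_inv_cancel _ (by simp [hφ0])
  linear_combination h

theorem fBGExpr_eq_fBGDecomp {x y t : MvPowerSeries σ k} {r R : ℕ}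
    (hx : constantCoeff x = 0) (hy : constantCoeff y = 0) (ht : constantCoeff t = 0)
    (hr : 0 < r) (hR : 0 < R) :
    fBGExpr x y t r R =
      fBGDecomp x y t (∑ i ∈ Finset.Ico 1 r, x ^ i) (∑ j ∈ Finset.Ico 1 R, y ^ j) r R := by
  let ι := algebraMap (MvPowerSeries σ k) (FractionRing (MvPowerSeries σ k))
  have hι : Function.Injective ι := IsFractionRing.injective _ _
  have ι_inv {φ : MvPowerSeries σ k} (hφ : constantCoeff φ ≠ 0) : ι φ⁻¹ = (ι φ)⁻¹ :=
    eq_inv_of_mul_eq_one_right (by rw [← map_mul, MvPowerSeries.mul_inv_cancel _ hφ, map_one])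
  have map_one_sub_ne {φ : MvPowerSeries σ k} (hφ : constantCoeff φ = 0) : ι (1 - φ) ≠ 0 :=
    (map_ne_zero_iff ι hι).mpr fun h => by simpa [hφ] using congrArg constantCoeff h
  have one_sub_mul_geom_sum {z : MvPowerSeries σ k} {n : ℕ} (hn : 0 < n) :
      (1 - z) * ∑ i ∈ Finset.Ico 1 n, z ^ i = z - z ^ n := by
    rw [mul_comm, geom_sum_Ico_mul_neg z hn, pow_one]
  have key := _root_.fBGExpr_eq_fBGDecomp (x := ι x) (y := ι y) (t := ι t)
    (P := ι (∑ i ∈ Finset.Ico 1 r, x ^ i)) (Q := ι (∑ j ∈ Finset.Ico 1 R, y ^ j))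
    (by simpa using congrArg ι (one_sub_mul_geom_sum hr))
    (by simpa using congrArg ι (one_sub_mul_geom_sum hR))
    (by simpa using map_one_sub_ne hx) (by simpa using map_one_sub_ne hy)
    (by simpa using map_one_sub_ne (φ := t * x) (by simp [ht]))
    (by simpa using map_one_sub_ne (φ := t * y) (by simp [ht]))
    (by simpa using map_one_sub_ne (φ := t * x ^ r) (by simp [ht]))
    (by simpa using map_one_sub_ne (φ := t * y ^ R) (by simp [ht]))
  apply hι
  unfold fBGExpr fBGDecomp at key ⊢
  simpa (disch := simp [hx, hy, ht]) only [map_add, map_mul, ι_inv, map_sub, map_one, map_pow]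
    using key

theorem fBGExpr_mem_nonnegCoeffs [PartialOrder k] [IsOrderedRing k]
    {x y t : MvPowerSeries σ k} {r R : ℕ}
    (hx : x ∈ nonnegCoeffs σ k) (hy : y ∈ nonnegCoeffs σ k) (ht : t ∈ nonnegCoeffs σ k)
    (hx0 : constantCoeff x = 0) (hy0 : constantCoeff y = 0) (ht0 : constantCoeff t = 0)
    (hr : 0 < r) (hR : 0 < R) :
    fBGExpr x y t r R ∈ nonnegCoeffs σ k := by
  have := inv_one_sub_mem_nonnegCoeffs hx hx0
  have := inv_one_sub_mem_nonnegCoeffs hy hy0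
  have := inv_one_sub_mem_nonnegCoeffs (mul_mem ht hx) (by simp [ht0])
  have := inv_one_sub_mem_nonnegCoeffs (mul_mem ht hy) (by simp [ht0])
  have := inv_one_sub_mem_nonnegCoeffs (mul_mem ht (pow_mem hx r)) (by simp [ht0])
  have := inv_one_sub_mem_nonnegCoeffs (mul_mem ht (pow_mem hy R)) (by simp [ht0])
  have : ∑ i ∈ Finset.Ico 1 r, x ^ i ∈ nonnegCoeffs σ k := sum_mem fun i _ => pow_mem hx i
  have : ∑ j ∈ Finset.Ico 1 R, y ^ j ∈ nonnegCoeffs σ k := sum_mem fun j _ => pow_mem hy j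
  rw [fBGExpr_eq_fBGDecomp hx0 hy0 ht0 hr hR, fBGDecomp]
  apply_rules (maxDepth := 100) [add_mem, mul_mem]

end MvPowerSeries

theorem fBG_nonneg (r R : ℕ) (hr : 0 < r) (hR : 0 < R) (d : Fin 3 →₀ ℕ) :
    0 ≤ MvPowerSeries.coeff d (fBG r R) :=
  fBGExpr_mem_nonnegCoeffs (X_mem_nonnegCoeffs 0) (X_mem_nonnegCoeffs 1) (X_mem_nonnegCoeffs 2)
    (constantCoeff_X 0) (constantCoeff_X 1) (constantCoeff_X 2) hr hR d
end

section
/- Let r, R be positive integers and f(x,y,t) = [(1-xy)(1-t x^r)(1-t y^R) + (1-t^2)(x-x^r)(y-y^R)] / [(1-t x^r)(1-t y^R)(1-x)(1-y)(1-tx)(1-ty)]. If n is a nonnegative integer with r \geq n, then all coefficients of x^j y^k in the coefficient of t^n of the power series expansion of f are nonnegative. -/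
/-!
With `x, y, t = X 0, X 1, X 2`, partial fractions give `fBG r R = T 1 R + T r 1 - T r R`, where
`T p q = (1 - x^p y^q) / ((1 - x) (1 - y) (1 - t x^p) (1 - t y^q))`. The coefficient of
`x^j y^k t^n` in `T p q` counts the `γ ≤ n` for which `(j, k)` lies in the hook
`{z ≥ c} \ {z ≥ c + (p, q)}` with corner `c = (γ p, (n - γ) q)`. For `r, R ≥ 1` and each `γ`, the
hook of `T r R` is covered by those of `T 1 R` and `T r 1`, whose corners lie weakly below it.
The coefficient formula is verified rather than derived: multiplying a series by `1 - x^a y^b t^c`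
takes a shifted difference of its coefficients, which undoes the four denominator factors one at a
time.
-/

open MvPowerSeries

open Finset

namespace MvPowerSeries

variable {A : Type*} [CommRing A]

def ofCoeff₃ (F : ℕ → ℕ → ℕ → A) : MvPowerSeries (Fin 3) A :=
  fun d => F (d 0) (d 1) (d 2)

@[simp]
lemma coeff_ofCoeff₃ (F : ℕ → ℕ → ℕ → A) (d : Fin 3 →₀ ℕ) :
    coeff d (ofCoeff₃ F) = F (d 0) (d 1) (d 2) := rfl

lemma coeff_single_add_single_add_single_ofCoeff₃ (F : ℕ → ℕ → ℕ → A) (a b c : ℕ) :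
    coeff (Finsupp.single 0 a + Finsupp.single 1 b + Finsupp.single 2 c) (ofCoeff₃ F) =
      F a b c := by
  simp

lemma one_eq_ofCoeff₃ :
    (1 : MvPowerSeries (Fin 3) A) =
      ofCoeff₃ fun a b c => if a = 0 ∧ b = 0 ∧ c = 0 then 1 else 0 := by
  ext d
  simp [coeff_one, Finsupp.ext_iff, Fin.forall_fin_succ]

lemma one_sub_monomial_mul_ofCoeff₃ (a b c : ℕ) (F : ℕ → ℕ → ℕ → A) :
    (1 - X 0 ^ a * X 1 ^ b * X 2 ^ c) * ofCoeff₃ F =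
      ofCoeff₃ fun i j l =>
        F i j l - if a ≤ i ∧ b ≤ j ∧ c ≤ l then F (i - a) (j - b) (l - c) else 0 := by
  ext d
  rw [X_pow_eq, X_pow_eq, X_pow_eq, monomial_mul_monomial, monomial_mul_monomial, one_mul,
    one_mul, sub_mul, one_mul, map_sub, coeff_monomial_mul]
  simp [Finsupp.le_def, Fin.forall_fin_succ]

end MvPowerSeries

def hook (c w : ℕ × ℕ) : Set (ℕ × ℕ) := Set.Ici c \ Set.Ici (c + w)

lemma hook_subset_union {u v U V a b r R : ℕ} (hu : u ≤ U) (hv : v ≤ V) :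
    hook (U, V) (r, R) ⊆ hook (u, V) (a, R) ∪ hook (U, v) (r, b) := by
  rintro ⟨j, k⟩
  simp only [hook, Set.mem_union, Set.mem_sdiff, Set.mem_Ici, Prod.mk_add_mk, Prod.mk_le_mk]
  omega

open Classical in
noncomputable def hookCount (p q j k n : ℕ) : ℕ :=
  #{γ ∈ range (n + 1) | (j, k) ∈ hook (γ * p, (n - γ) * q) (p, q)}

lemma hookCount_le_add {r R : ℕ} (hr : 0 < r) (hR : 0 < R) (j k n : ℕ) :
    hookCount r R j k n ≤ hookCount 1 R j k n + hookCount r 1 j k n := by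
  refine (card_le_card fun γ => ?_).trans (card_union_le _ _)
  simp only [mem_filter, mem_union, mul_one]
  rintro ⟨hγ, hjk⟩
  exact (hook_subset_union (Nat.le_mul_of_pos_right γ hr) (Nat.le_mul_of_pos_right (n - γ) hR)
    hjk).imp (⟨hγ, ·⟩) (⟨hγ, ·⟩)

section

variable {A : Type*} [CommRing A]

def denomInv (p q : ℕ) : MvPowerSeries (Fin 3) A :=
  ofCoeff₃ fun a b c => #{γ ∈ range (c + 1) | γ * p ≤ a ∧ (c - γ) * q ≤ b}

lemma one_sub_X_zero_mul_ofCoeff₃ :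
    (1 - X 0) * ofCoeff₃ (A := A) (fun _ b c => if b = 0 ∧ c = 0 then 1 else 0) = 1 := by
  have h := one_sub_monomial_mul_ofCoeff₃ (A := A) 1 0 0
    (fun _ b c => if b = 0 ∧ c = 0 then 1 else 0)
  simp only [pow_one, pow_zero, mul_one] at h
  rw [h, one_eq_ofCoeff₃]
  congr; funext a b c
  split_ifs <;> first | (exfalso; omega) | simp

lemma one_sub_X_one_mul_ofCoeff₃ :
    (1 - X 1) * ofCoeff₃ (A := A) (fun _ _ c => if c = 0 then 1 else 0) =
      ofCoeff₃ (fun _ b c => if b = 0 ∧ c = 0 then 1 else 0) := by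
  have h := one_sub_monomial_mul_ofCoeff₃ (A := A) 0 1 0 (fun _ _ c => if c = 0 then 1 else 0)
  simp only [pow_one, pow_zero, mul_one, one_mul] at h
  rw [h]
  congr; funext a b c
  split_ifs <;> first | (exfalso; omega) | simp

lemma one_sub_X_two_mul_X_zero_pow_mul_ofCoeff₃ (p : ℕ) :
    (1 - X 2 * X 0 ^ p) * ofCoeff₃ (A := A) (fun a _ c => if c * p ≤ a then 1 else 0) =
      ofCoeff₃ (fun _ _ c => if c = 0 then 1 else 0) := by
  have h := one_sub_monomial_mul_ofCoeff₃ (A := A) p 0 1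
    (fun a _ c => if c * p ≤ a then 1 else 0)
  rw [pow_zero, mul_one, pow_one, mul_comm (X 0 ^ p)] at h
  rw [h]
  congr; funext a b c
  rcases c with _ | c
  · simp
  · rw [Nat.add_sub_cancel, Nat.succ_mul]
    split_ifs <;> first | (exfalso; omega) | simp

lemma one_sub_X_two_mul_X_one_pow_mul_denomInv (p q : ℕ) :
    (1 - X 2 * X 1 ^ q) * denomInv (A := A) p q =
      ofCoeff₃ (fun a _ c => if c * p ≤ a then 1 else 0) := by
  have h := one_sub_monomial_mul_ofCoeff₃ (A := A) 0 q 1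
    (fun a b c => (#{γ ∈ range (c + 1) | γ * p ≤ a ∧ (c - γ) * q ≤ b} : A))
  rw [pow_zero, one_mul, pow_one, mul_comm (X 1 ^ q)] at h
  rw [denomInv, h]
  congr; funext a b c
  rcases c with _ | c
  · simp [filter_singleton]
  have hshift : ∀ γ ∈ range (c + 1), (c + 1 - γ) * q = (c - γ) * q + q := fun γ hγ => by
    rw [mem_range] at hγ
    rw [show c + 1 - γ = c - γ + 1 by omega, Nat.succ_mul]
  simp only [natCast_card_filter, sum_range_succ _ (c + 1), Nat.sub_self, zero_mul, zero_le,
    and_true, Nat.add_sub_cancel, Nat.sub_zero, true_and, le_add_iff_nonneg_left]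
  rw [add_sub_right_comm, add_eq_right, sub_eq_zero]
  split_ifs
  · refine sum_congr rfl fun γ hγ => if_congr ?_ rfl rfl
    rw [hshift γ hγ]
    omega
  · refine sum_eq_zero fun γ hγ => if_neg ?_
    rw [hshift γ hγ]
    omega

lemma mul_denomInv (p q : ℕ) :
    (1 - X 0) * (1 - X 1) * (1 - X 2 * X 0 ^ p) * (1 - X 2 * X 1 ^ q) * denomInv (A := A) p q
      = 1 := by
  rw [mul_assoc, one_sub_X_two_mul_X_one_pow_mul_denomInv, mul_assoc,
    one_sub_X_two_mul_X_zero_pow_mul_ofCoeff₃, mul_assoc, one_sub_X_one_mul_ofCoeff₃,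
    one_sub_X_zero_mul_ofCoeff₃]

noncomputable def hookSeries (p q : ℕ) : MvPowerSeries (Fin 3) A :=
  ofCoeff₃ fun j k n => hookCount p q j k n

lemma one_sub_X_pow_mul_denomInv (p q : ℕ) :
    (1 - X 0 ^ p * X 1 ^ q) * denomInv (A := A) p q = hookSeries p q := by
  have h := one_sub_monomial_mul_ofCoeff₃ (A := A) p q 0
    (fun a b c => (#{γ ∈ range (c + 1) | γ * p ≤ a ∧ (c - γ) * q ≤ b} : A))
  rw [pow_zero, mul_one] at h
  rw [denomInv, h, hookSeries]
  congr; funext j k n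
  classical
  simp only [hookCount, natCast_card_filter, zero_le, and_true, Nat.sub_zero]
  split_ifs
  · rw [← sum_sub_distrib]
    refine sum_congr rfl fun γ _ => ?_
    simp only [hook, Set.mem_sdiff, Set.mem_Ici, Prod.mk_add_mk, Prod.mk_le_mk]
    split_ifs <;> first | (exfalso; omega) | simp
  · rw [sub_zero]
    refine sum_congr rfl fun γ _ => if_congr ?_ rfl rfl
    simp only [hook, Set.mem_sdiff, Set.mem_Ici, Prod.mk_add_mk, Prod.mk_le_mk]
    omega

end

lemma fBG_eq_hookSeries (r R : ℕ) :
    fBG r R = hookSeries 1 R + hookSeries r 1 - hookSeries r R := by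
  rw [fBG, eq_comm, MvPowerSeries.eq_mul_inv_iff_mul_eq (by simp), ← one_sub_X_pow_mul_denomInv,
    ← one_sub_X_pow_mul_denomInv, ← one_sub_X_pow_mul_denomInv]
  linear_combination
    (1 - X 0 ^ 1 * X 1 ^ R) * (1 - X 2 * X 0 ^ r) * (1 - X 2 * X 1) * mul_denomInv (A := ℚ) 1 R +
    (1 - X 0 ^ r * X 1 ^ 1) * (1 - X 2 * X 1 ^ R) * (1 - X 2 * X 0) * mul_denomInv (A := ℚ) r 1 -
    (1 - X 0 ^ r * X 1 ^ R) * (1 - X 2 * X 0) * (1 - X 2 * X 1) * mul_denomInv (A := ℚ) r R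

theorem fBG_nonneg_of_le_general (r R : ℕ) (hr : 0 < r) (hR : 0 < R)
    (n : ℕ) (j k : ℕ) :
    0 ≤ MvPowerSeries.coeff
      (Finsupp.single 0 j + Finsupp.single 1 k + Finsupp.single 2 n)
      (fBG r R) := by
  rw [fBG_eq_hookSeries, map_sub, map_add, sub_nonneg, hookSeries, hookSeries, hookSeries,
    coeff_single_add_single_add_single_ofCoeff₃, coeff_single_add_single_add_single_ofCoeff₃,
    coeff_single_add_single_add_single_ofCoeff₃]
  exact_mod_cast hookCount_le_add hr hR j k n

theorem fBG_nonneg_of_le (r R : ℕ) (hr : 0 < r) (hR : 0 < R)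
    (n : ℕ) (hn : n ≤ r) (j k : ℕ) :
    0 ≤ MvPowerSeries.coeff
      (Finsupp.single 0 j + Finsupp.single 1 k + Finsupp.single 2 n)
      (fBG r R) :=
  fBG_nonneg_of_le_general r R hr hR n j k
end

section
/- For any positive integers x, y, z, r, R, \rho, the power series expansion of 1/((1-q^x)(1-q^y)(1-q^z)(1-q^{rx+Ry+\rho z})) - 1/((1-q^{rx})(1-q^{Ry})(1-q^{\rho z})(1-q^{x+y+z})) has all coefficients nonnegative. -/
/-!
Expanding every factor as a geometric series, the coefficient of `q ^ n` in
`∏ i, (1 - q ^ (w i))⁻¹` is the number of `k : ι → ℕ` with `∑ i, w i * k i = n`.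
With `m = min k₀ k₁ k₂`, the map
`(k₀, k₁, k₂, k₃) ↦ (r (k₀ - m) + k₃, R (k₁ - m) + k₃, ρ (k₂ - m) + k₃, m)`
sends representations of `n` with weights `(r x, R y, ρ z, x + y + z)` to representations with
weights `(x, y, z, r x + R y + ρ z)`. It is injective: `m` is its last coordinate, and since one
of `k₀ - m, k₁ - m, k₂ - m` vanishes, `k₃` is the minimum of the first three.
-/

open PowerSeries Finset

variable {K : Type*} [Field K]

theorem coeff_inv_one_sub_X_pow {a : ℕ} (ha : 0 < a) (n : ℕ) :
    coeff n (1 - X ^ a : K⟦X⟧)⁻¹ = if a ∣ n then 1 else 0 := by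
  suffices h : (1 - (X : K⟦X⟧) ^ a)⁻¹ = mk fun n => if a ∣ n then 1 else 0 by
    rw [h, coeff_mk]
  rw [PowerSeries.inv_eq_iff_mul_eq_one (by simp [ha.ne'])]
  ext n
  rw [mul_sub, mul_one, map_sub, coeff_mul_X_pow', coeff_mk, coeff_one]
  rcases n.eq_zero_or_pos with rfl | hn
  · simp [ha.ne']
  · by_cases han : a ≤ n
    · have hdvd : a ∣ n - a ↔ a ∣ n := Nat.dvd_sub_iff_left han dvd_rfl
      simp [han, hn.ne', hdvd]
    · simp [han, hn.ne', mt (Nat.le_of_dvd hn) han]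

section
variable {ι : Type*} [Fintype ι]

def weightedSolutions (w : ι → ℕ) (n : ℕ) : Set (ι → ℕ) := {k | ∑ i, w i * k i = n}

variable {w : ι → ℕ}

theorem equivFunOnFinite_symm_mul_left_injective (hw : ∀ i, 0 < w i) :
    Function.Injective fun k : ι → ℕ => Finsupp.equivFunOnFinite.symm (w * k) := by
  intro k k' h
  funext i
  simpa [(hw i).ne'] using DFunLike.congr_fun h i

variable [DecidableEq ι]

theorem finsuppAntidiag_filter_dvd_eq_image (n : ℕ) :
    (({l ∈ finsuppAntidiag univ n | ∀ i, w i ∣ l i} : Finset (ι →₀ ℕ)) : Set (ι →₀ ℕ)) =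
      (fun k => Finsupp.equivFunOnFinite.symm (w * k)) '' weightedSolutions w n := by
  ext l
  simp only [coe_filter, mem_finsuppAntidiag, subset_univ, and_true,
    Set.mem_ofPred_eq, Set.mem_image, weightedSolutions]
  constructor
  · rintro ⟨hsum, hdvd⟩
    refine ⟨fun i => l i / w i, ?_, ?_⟩
    · simp_rw [Nat.mul_div_cancel' (hdvd _)]; exact hsum
    · ext i; simp [Nat.mul_div_cancel' (hdvd i)]
  · rintro ⟨k, hk, rfl⟩
    simpa using hk

theorem weightedSolutions_finite (hw : ∀ i, 0 < w i) (n : ℕ) : (weightedSolutions w n).Finite :=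
  Set.Finite.of_finite_image (finsuppAntidiag_filter_dvd_eq_image (w := w) n ▸ finite_toSet _)
    (equivFunOnFinite_symm_mul_left_injective hw).injOn

theorem coeff_prod_inv_one_sub_X_pow (hw : ∀ i, 0 < w i) (n : ℕ) :
    coeff n (∏ i, (1 - X ^ w i)⁻¹ : K⟦X⟧) = (weightedSolutions w n).ncard := by
  simp only [coeff_prod, coeff_inv_one_sub_X_pow (hw _), prod_boole, mem_univ, true_imp_iff]
  rw [sum_boole, ← Set.ncard_coe_finset, finsuppAntidiag_filter_dvd_eq_image,
    Set.ncard_image_of_injective _ (equivFunOnFinite_symm_mul_left_injective hw)]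
end

theorem inv_prod_four_eq (a b c d : ℕ) :
    ((1 - X ^ a) * (1 - X ^ b) * (1 - X ^ c) * (1 - X ^ d) : K⟦X⟧)⁻¹ =
      ∏ i, (1 - X ^ ![a, b, c, d] i)⁻¹ := by
  simp only [Fin.prod_univ_four, Matrix.cons_val, PowerSeries.mul_inv_rev]
  ring

def dominantMap (r R ρ : ℕ) (k : Fin 4 → ℕ) : Fin 4 → ℕ :=
  let m := min (k 0) (min (k 1) (k 2))
  ![r * (k 0 - m) + k 3, R * (k 1 - m) + k 3, ρ * (k 2 - m) + k 3, m]

def dominantMapInv (r R ρ : ℕ) (v : Fin 4 → ℕ) : Fin 4 → ℕ :=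
  let d := min (v 0) (min (v 1) (v 2))
  ![v 3 + (v 0 - d) / r, v 3 + (v 1 - d) / R, v 3 + (v 2 - d) / ρ, d]

theorem dominantMap_leftInverse {r R ρ : ℕ} (hr : 0 < r) (hR : 0 < R) (hρ : 0 < ρ) :
    Function.LeftInverse (dominantMapInv r R ρ) (dominantMap r R ρ) := by
  intro k
  set m := min (k 0) (min (k 1) (k 2)) with hm
  have hzero : r * (k 0 - m) = 0 ∨ R * (k 1 - m) = 0 ∨ ρ * (k 2 - m) = 0 := by
    simp only [mul_eq_zero]; omega
  have hmin : min (r * (k 0 - m) + k 3) (min (R * (k 1 - m) + k 3) (ρ * (k 2 - m) + k 3)) = k 3 := by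
    omega
  have hk : dominantMap r R ρ k =
      ![r * (k 0 - m) + k 3, R * (k 1 - m) + k 3, ρ * (k 2 - m) + k 3, m] := rfl
  rw [hk, dominantMapInv]
  simp only [Matrix.cons_val, hmin, Nat.add_sub_cancel, Nat.mul_div_cancel_left _ hr,
    Nat.mul_div_cancel_left _ hR, Nat.mul_div_cancel_left _ hρ]
  funext i
  fin_cases i <;> simp <;> omega

theorem dominantMap_injective {r R ρ : ℕ} (hr : 0 < r) (hR : 0 < R) (hρ : 0 < ρ) :
    Function.Injective (dominantMap r R ρ) :=
  (dominantMap_leftInverse hr hR hρ).injective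

theorem mapsTo_dominantMap (x y z r R ρ n : ℕ) :
    Set.MapsTo (dominantMap r R ρ) (weightedSolutions ![r * x, R * y, ρ * z, x + y + z] n)
      (weightedSolutions ![x, y, z, r * x + R * y + ρ * z] n) := by
  intro k hk
  set m := min (k 0) (min (k 1) (k 2)) with hm
  obtain ⟨a, ha⟩ : ∃ a, k 0 = m + a := ⟨k 0 - m, by omega⟩
  obtain ⟨b, hb⟩ : ∃ b, k 1 = m + b := ⟨k 1 - m, by omega⟩
  obtain ⟨c, hc⟩ : ∃ c, k 2 = m + c := ⟨k 2 - m, by omega⟩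
  simp only [weightedSolutions, Set.mem_ofPred_eq, Fin.sum_univ_four, dominantMap, ← hm] at hk ⊢
  simp only [Matrix.cons_val, ha, hb, hc, Nat.add_sub_cancel_left] at hk ⊢
  linear_combination hk

theorem dominant_xyz_L1 (x y z r R ρ : ℕ) (hx : 0 < x) (hy : 0 < y)
    (hz : 0 < z) (hr : 0 < r) (hR : 0 < R) (hρ : 0 < ρ) (n : ℕ) :
    0 ≤ PowerSeries.coeff n
      (((1 - (X : ℚ⟦X⟧) ^ x) * (1 - X ^ y) * (1 - X ^ z) *
          (1 - X ^ (r * x + R * y + ρ * z)))⁻¹ -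
       ((1 - (X : ℚ⟦X⟧) ^ (r * x)) * (1 - X ^ (R * y)) * (1 - X ^ (ρ * z)) *
          (1 - X ^ (x + y + z)))⁻¹) := by
  have hw : ∀ i, 0 < ![x, y, z, r * x + R * y + ρ * z] i := by
    intro i; fin_cases i <;> dsimp <;> positivity
  have hw' : ∀ i, 0 < ![r * x, R * y, ρ * z, x + y + z] i := by
    intro i; fin_cases i <;> dsimp <;> positivity
  rw [inv_prod_four_eq, inv_prod_four_eq, map_sub, coeff_prod_inv_one_sub_X_pow hw,
    coeff_prod_inv_one_sub_X_pow hw', sub_nonneg, Nat.cast_le]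
  exact Set.ncard_le_ncard_of_injOn _ (mapsTo_dominantMap x y z r R ρ n)
    (dominantMap_injective hr hR hρ).injOn (weightedSolutions_finite hw n)
end

section
/- Let n be a positive integer and x_1,...,x_n, r_1,...,r_n positive integers. Set \Sigma = r_1 x_1 + ... + r_n x_n and \sigma = x_1 + ... + x_n. Then the power series 1/((1-q^{x_1})...(1-q^{x_n})(1-q^{\Sigma})) - 1/((1-q^{r_1 x_1})...(1-q^{r_n x_n})(1-q^{\sigma})) has all nonnegative coefficients. -/
/-!
Expanding each factor geometrically, the coefficient of `q^k` in `1 / ∏ (1 - q^{w_j})` counts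
the multiplicity vectors `m` with `∑ w_j m_j = k`. For the subtracted series these are
`(m_1, …, m_n, m_0)` with `∑ r_i x_i m_i + σ m_0 = k`. Putting `a = min_i m_i`, the vector
`(r_1 (m_1 - a) + m_0, …, r_n (m_n - a) + m_0, a)` solves `∑ x_i m'_i + Σ m'_0 = k`, and the map
is injective: the minimum of its first `n` entries is `m_0`, attained at a minimising index of `m`.
-/

open PowerSeries Finset

theorem one_sub_X_pow_mul_mk_dvd {R : Type*} [Ring R] {a : ℕ} (ha : 0 < a) :
    (1 - X ^ a : R⟦X⟧) * mk (fun k => if a ∣ k then 1 else 0) = 1 := by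
  ext k
  rw [sub_mul, one_mul, map_sub, coeff_X_pow_mul', coeff_mk, coeff_one]
  by_cases hak : a ≤ k
  · have hk : k ≠ 0 := by omega
    simp [hak, hk, Nat.dvd_sub_iff_left hak dvd_rfl]
  · have hdvd : a ∣ k ↔ k = 0 :=
      ⟨fun h => Nat.eq_zero_of_dvd_of_lt h (by omega), by rintro rfl; simp⟩
    simp [hak, hdvd]

section WeightedSumFiber

variable {ι : Type*} [Fintype ι] [DecidableEq ι]

def weightedSumFiber (w : ι → ℕ) (k : ℕ) : Finset (ι → ℕ) :=
  {m ∈ Fintype.piFinset fun _ => range (k + 1) | ∑ i, w i * m i = k}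

theorem mem_weightedSumFiber {w : ι → ℕ} (hw : ∀ i, 0 < w i) {k : ℕ} {m : ι → ℕ} :
    m ∈ weightedSumFiber w k ↔ ∑ i, w i * m i = k := by
  refine ⟨fun h => (mem_filter.mp h).2, fun h => mem_filter.mpr ⟨?_, h⟩⟩
  refine Fintype.mem_piFinset.mpr fun i => mem_range.mpr (Nat.lt_succ_of_le ?_)
  calc m i ≤ w i * m i := Nat.le_mul_of_pos_left _ (hw i)
    _ ≤ ∑ j, w j * m j :=
      single_le_sum (f := fun j => w j * m j) (fun j _ => Nat.zero_le _) (mem_univ i)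
    _ = k := h

theorem coeff_prod_mk_dvd {R : Type*} [CommSemiring R] {w : ι → ℕ} (hw : ∀ i, 0 < w i) (k : ℕ) :
    coeff k (∏ i, mk fun n => if w i ∣ n then (1 : R) else 0) = #(weightedSumFiber w k) := by
  rw [coeff_prod]
  simp only [coeff_mk, prod_boole, mem_univ, true_imp_iff]
  rw [sum_boole]
  congr 1
  refine card_nbij' (fun l i => l i / w i)
    (fun m => Finsupp.equivFunOnFinite.symm fun i => w i * m i) ?_ ?_ ?_ ?_
  · intro l hl
    simp only [coe_filter, mem_finsuppAntidiag, Set.mem_ofPred_eq] at hl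
    rw [mem_coe, mem_weightedSumFiber hw, ← hl.1.1]
    exact sum_congr rfl fun i _ => Nat.mul_div_cancel' (hl.2 i)
  · intro m hm
    rw [mem_coe, mem_weightedSumFiber hw] at hm
    simp [mem_finsuppAntidiag, hm]
  · intro l hl
    ext i
    simp [Nat.mul_div_cancel' ((mem_filter.mp hl).2 i)]
  · intro m _
    ext i
    simp [Nat.mul_div_cancel_left _ (hw i)]

theorem coeff_inv_prod_one_sub_X_pow {K : Type*} [Field K] {w : ι → ℕ} (hw : ∀ i, 0 < w i)
    (k : ℕ) : coeff k (∏ i, (1 - X ^ w i : K⟦X⟧))⁻¹ = #(weightedSumFiber w k) := by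
  have hinv :
      (∏ i, (1 - X ^ w i : K⟦X⟧))⁻¹ = ∏ i, mk fun n => if w i ∣ n then (1 : K) else 0 := by
    rw [PowerSeries.inv_eq_iff_mul_eq_one, ← prod_mul_distrib]
    · exact prod_eq_one fun i _ => by rw [mul_comm]; exact one_sub_X_pow_mul_mk_dvd (hw i)
    · simp [map_prod, (hw _).ne']
  rw [hinv, coeff_prod_mk_dvd hw]

end WeightedSumFiber

section Exchange

variable {ι : Type*} [Fintype ι] [Nonempty ι]

def minSome (m : Option ι → ℕ) : ℕ := univ.inf' univ_nonempty fun i => m (some i)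

theorem minSome_le (m : Option ι → ℕ) (i : ι) : minSome m ≤ m (some i) :=
  inf'_le _ (mem_univ i)

def exchange (r : ι → ℕ) (m : Option ι → ℕ) : Option ι → ℕ :=
  fun j => j.elim (minSome m) fun i => r i * (m (some i) - minSome m) + m none

theorem minSome_exchange (r : ι → ℕ) (m : Option ι → ℕ) :
    minSome (exchange r m) = m none := by
  obtain ⟨i, -, hi⟩ := exists_mem_eq_inf' univ_nonempty fun i => m (some i)
  refine le_antisymm ((minSome_le _ i).trans ?_) (le_inf' _ _ fun i _ => ?_)
  · simp [exchange, minSome, ← hi]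
  · simp [exchange]

theorem exchange_injective {r : ι → ℕ} (hr : ∀ i, 0 < r i) :
    Function.Injective (exchange r) := by
  intro m m' h
  have hnone : m none = m' none := by rw [← minSome_exchange r m, h, minSome_exchange]
  have hmin : minSome m = minSome m' := congrFun h none
  funext j
  cases j with
  | none => exact hnone
  | some i =>
    have hi := congrFun h (some i)
    simp only [exchange, Option.elim_some, hnone, hmin, Nat.add_right_cancel_iff,
      Nat.mul_left_cancel_iff (hr i)] at hi
    have := minSome_le m i
    have := minSome_le m' i
    omega

theorem sum_weight_mul_exchange (x r : ι → ℕ) (m : Option ι → ℕ) :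
    ∑ j, j.elim (∑ i, r i * x i) x * exchange r m j =
      ∑ j, j.elim (∑ i, x i) (fun i => r i * x i) * m j := by
  have key (i : ι) : x i * exchange r m (some i) + r i * x i * minSome m =
      r i * x i * m (some i) + x i * m none := by
    obtain ⟨d, hd⟩ := Nat.exists_eq_add_of_le (minSome_le m i)
    simp only [exchange, Option.elim_some, hd, Nat.add_sub_cancel_left]
    ring
  have hsum := sum_congr rfl fun i (_ : i ∈ univ) => key i
  simp only [sum_add_distrib, ← sum_mul, exchange, Option.elim_some] at hsum
  simp only [Fintype.sum_option, Option.elim_none, Option.elim_some, exchange]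
  linarith

end Exchange

theorem prod_option_one_sub_X_pow {ι R : Type*} [Fintype ι] [CommRing R] (a : ℕ) (w : ι → ℕ) :
    ∏ j : Option ι, (1 - X ^ j.elim a w : R⟦X⟧) = (∏ i, (1 - X ^ w i)) * (1 - X ^ a) := by
  rw [Fintype.prod_option, mul_comm]
  rfl

theorem coeff_inv_prod_one_sub_X_pow_le {ι K : Type*} [Fintype ι] [Nonempty ι] [DecidableEq ι]
    [Field K] [LinearOrder K] [IsStrictOrderedRing K] {x r : ι → ℕ} (hx : ∀ i, 0 < x i)
    (hr : ∀ i, 0 < r i) (k : ℕ) :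
    coeff k ((∏ i, (1 - X ^ (r i * x i) : K⟦X⟧)) * (1 - X ^ ∑ i, x i))⁻¹ ≤
      coeff k ((∏ i, (1 - X ^ x i : K⟦X⟧)) * (1 - X ^ ∑ i, r i * x i))⁻¹ := by
  have hrx (i : ι) : 0 < r i * x i := Nat.mul_pos (hr i) (hx i)
  have hA : ∀ j : Option ι, 0 < j.elim (∑ i, r i * x i) x :=
    Option.forall.mpr ⟨sum_pos (fun i _ => hrx i) univ_nonempty, hx⟩
  have hB : ∀ j : Option ι, 0 < j.elim (∑ i, x i) fun i => r i * x i :=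
    Option.forall.mpr ⟨sum_pos (fun i _ => hx i) univ_nonempty, hrx⟩
  rw [← prod_option_one_sub_X_pow, ← prod_option_one_sub_X_pow,
    coeff_inv_prod_one_sub_X_pow hA, coeff_inv_prod_one_sub_X_pow hB, Nat.cast_le]
  refine card_le_card_of_injOn (exchange r) (fun m hm => ?_) (exchange_injective hr).injOn
  rw [mem_coe, mem_weightedSumFiber hA, sum_weight_mul_exchange]
  exact (mem_weightedSumFiber hB).mp hm

theorem proposal_L1 (n : ℕ) (hn : 0 < n) (x r : Fin n → ℕ)
    (hx : ∀ i, 0 < x i) (hr : ∀ i, 0 < r i) (k : ℕ) :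
    0 ≤ PowerSeries.coeff k
      (((∏ i, (1 - (X : ℚ⟦X⟧) ^ (x i))) * (1 - X ^ (∑ i, r i * x i)))⁻¹ -
       ((∏ i, (1 - (X : ℚ⟦X⟧) ^ (r i * x i))) * (1 - X ^ (∑ i, x i)))⁻¹) := by
  have : Nonempty (Fin n) := ⟨⟨0, hn⟩⟩
  rw [map_sub, sub_nonneg]
  exact coeff_inv_prod_one_sub_X_pow_le hx hr k
end

section
/- Let n \geq 1 and positive integers x_1,...,x_n, r_1,...,r_n, with \Sigma = \sum r_i x_i and \sigma = \sum x_i. Define a map \Phi from (\mathbb{N}^n) \times \mathbb{N} to (\mathbb{N}^n) \times \mathbb{N} by: given (a_1,...,a_n, b) (interpreted as multiplicities of parts r_1 x_1,...,r_n x_n, \sigma), let \mu' = \min_i a_i, and set \Phi(a,b) = (c_1,...,c_n, d) where d = \mu' and c_i = r_i (a_i - \mu') + b. Then \Phi is injective and preserves the weighted sum: \sum_i c_i x_i + d \Sigma = \sum_i a_i r_i x_i + b \sigma. -/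
theorem proposal_injection (n : ℕ) (hn : 0 < n) (x r : Fin n → ℕ)
    (hx : ∀ i, 0 < x i) (hr : ∀ i, 0 < r i)
    (Φ : ((Fin n → ℕ) × ℕ) → ((Fin n → ℕ) × ℕ))
    (hΦ : ∀ (a : Fin n → ℕ) (b : ℕ), Φ (a, b) =
      (fun i => r i * (a i - Finset.univ.inf' ⟨⟨0, hn⟩, Finset.mem_univ _⟩ a) + b,
       Finset.univ.inf' ⟨⟨0, hn⟩, Finset.mem_univ _⟩ a)) :
    Function.Injective Φ ∧
      ∀ (a : Fin n → ℕ) (b : ℕ),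
        (∑ i, (Φ (a, b)).1 i * x i) + (Φ (a, b)).2 * (∑ i, r i * x i) =
          (∑ i, a i * (r i * x i)) + b * (∑ i, x i) := by
  set ne : (Finset.univ : Finset (Fin n)).Nonempty := ⟨⟨0, hn⟩, Finset.mem_univ _⟩ with hne
  constructor
  · rintro ⟨a, b⟩ ⟨a', b'⟩ h
    rw [hΦ, hΦ, Prod.mk.injEq] at h
    obtain ⟨h1, h2⟩ := h
    have h1' : ∀ i, r i * (a i - Finset.univ.inf' ne a) + b
        = r i * (a' i - Finset.univ.inf' ne a') + b' := fun i => congrFun h1 i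
    have hmin : ∀ (f : Fin n → ℕ), ∃ i, f i = Finset.univ.inf' ne f := by
      intro f
      obtain ⟨i, _, hi⟩ := Finset.exists_mem_eq_inf' ne f
      exact ⟨i, hi.symm⟩
    have hle : ∀ (f : Fin n → ℕ) i, Finset.univ.inf' ne f ≤ f i := fun f i =>
      Finset.inf'_le _ (Finset.mem_univ i)
    obtain ⟨i, hi⟩ := hmin a
    obtain ⟨j, hj⟩ := hmin a'
    have hbb' : b = b' := by
      have e1 := h1' i
      have e2 := h1' j
      rw [hi, Nat.sub_self] at e1
      rw [hj, Nat.sub_self] at e2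
      simp at e1 e2
      omega
    have ha : a = a' := by
      funext k
      have e := h1' k
      rw [hbb', h2, Nat.add_right_cancel_iff] at e
      have := Nat.eq_of_mul_eq_mul_left (hr k) e
      have l1 := hle a k
      have l2 := hle a' k
      omega
    rw [ha, hbb']
  · intro a b
    rw [hΦ]
    simp only
    rw [Finset.mul_sum, ← Finset.sum_add_distrib, Finset.mul_sum, ← Finset.sum_add_distrib]
    apply Finset.sum_congr rfl
    intro i _
    have l1 : Finset.univ.inf' ne a ≤ a i := Finset.inf'_le _ (Finset.mem_univ i)
    cases Nat.le.dest l1 with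
    | intro c hc => rw [← hc, Nat.add_sub_cancel_left]; ring
end
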